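/- Let O be a finite outcome set, R: O × Z^n → ℝ an objective with global sensitivity Δ, and for a dataset D let Ŝ_1(D), ..., Ŝ_{|O|}(D) be the elements of O sorted by increasing objective value. Fix 1 < R < |O| and define the truncated objective R̂(S, D) = R(S, D) if S ∈ {Ŝ_1(D), ..., Ŝ_R(D)}, and R̂(S, D) = R(Ŝ_R(D), D) otherwise. Then R̂ has global sensitivity at most Δ: for every S ∈ O and every pair of neighboring datasets D, D', |R̂(S,D) − R̂(S,D')| ≤ Δ. -/
import Mathlib

open Classical

/-- Two datasets are neighbors if they differ in at most one record. -/
def Neighbor {Z : Type*} {n : ℕ} (D D' : Fin n → Z) : Prop :=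
  ∃ i, ∀ j, j ≠ i → D j = D' j

theorem neighbor_symm {Z : Type*} {n : ℕ} {D D' : Fin n → Z} (h : Neighbor D D') :
    Neighbor D' D := by
  obtain ⟨i, hi⟩ := h
  exact ⟨i, fun j hj => (hi j hj).symm⟩

-- order statistic sensitivity, one side
theorem orderstat_le {Z O : Type*} [Fintype O] {n : ℕ}
    (F : O → (Fin n → Z) → ℝ) (Δ : ℝ)
    (hsens : ∀ (o : O) (D D' : Fin n → Z), Neighbor D D' → |F o D - F o D'| ≤ Δ)
    (Shat : (Fin n → Z) → Fin (Fintype.card O) → O)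
    (hbij : ∀ D, Function.Bijective (Shat D))
    (hmono : ∀ D, Monotone (fun k => F (Shat D k) D))
    (Rk : Fin (Fintype.card O)) (D D' : Fin n → Z) (hnb : Neighbor D D') :
    F (Shat D Rk) D ≤ F (Shat D' Rk) D' + Δ := by
  let e : Fin (Fintype.card O) ≃ O := Equiv.ofBijective _ (hbij D)
  let φ : Fin (Fintype.card O) → Fin (Fintype.card O) := fun k => e.symm (Shat D' k)
  have hφinj : Function.Injective φ := fun a b hab => by
    have := congrArg e hab
    simp only [φ, e, Equiv.apply_symm_apply] at this
    exact (hbij D').injective this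
  have hcard : (Finset.Iic Rk).card = (Rk : ℕ) + 1 := by
    simp [Fin.card_Iic]
  -- there is k ∈ Iic Rk with Rk ≤ φ k
  have : ∃ k ∈ Finset.Iic Rk, Rk ≤ φ k := by
    by_contra h
    push_neg at h
    have hsub : (Finset.Iic Rk).image φ ⊆ Finset.Iio Rk := by
      intro x hx
      obtain ⟨k, hk, rfl⟩ := Finset.mem_image.mp hx
      exact Finset.mem_Iio.mpr (h k hk)
    have h1 : ((Finset.Iic Rk).image φ).card = (Rk : ℕ) + 1 := by
      rw [Finset.card_image_of_injective _ hφinj, hcard]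
    have h2 : (Finset.Iio Rk).card = (Rk : ℕ) := by simp [Fin.card_Iio]
    have := Finset.card_le_card hsub
    omega
  obtain ⟨k, hk, hk'⟩ := this
  have hSe : Shat D (φ k) = Shat D' k := by
    simp only [φ, e, Equiv.ofBijective_apply_symm_apply]
  calc F (Shat D Rk) D ≤ F (Shat D (φ k)) D := hmono D hk'
    _ = F (Shat D' k) D := by rw [hSe]
    _ ≤ F (Shat D' k) D' + Δ := by
        have := hsens (Shat D' k) D D' hnb
        have := abs_sub_le_iff.mp this
        linarith [this.1]
    _ ≤ F (Shat D' Rk) D' + Δ := by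
        have := hmono D' (Finset.mem_Iic.mp hk)
        linarith

theorem Fprime_eq_min {Z O : Type*} [Fintype O] {n : ℕ}
    (F : O → (Fin n → Z) → ℝ)
    (Shat : (Fin n → Z) → Fin (Fintype.card O) → O)
    (hbij : ∀ D, Function.Bijective (Shat D))
    (hmono : ∀ D, Monotone (fun k => F (Shat D k) D))
    (Rk : Fin (Fintype.card O))
    (F' : O → (Fin n → Z) → ℝ)
    (hF' : ∀ (S : O) (D : Fin n → Z),
      F' S D = if ∃ k ≤ Rk, S = Shat D k then F S D else F (Shat D Rk) D)
    (S : O) (D : Fin n → Z) :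
    F' S D = min (F S D) (F (Shat D Rk) D) := by
  rw [hF']
  by_cases h : ∃ k ≤ Rk, S = Shat D k
  · obtain ⟨k, hk, rfl⟩ := h
    rw [if_pos ⟨k, hk, rfl⟩, min_eq_left (hmono D hk)]
  · rw [if_neg h]
    obtain ⟨k, rfl⟩ := (hbij D).surjective S
    have : Rk ≤ k := by
      by_contra hc
      push_neg at hc
      exact h ⟨k, le_of_lt hc, rfl⟩
    rw [min_eq_right (hmono D this)]

/-- The truncated objective `F̂`, which keeps the objective of the top-`R` outcomes and
replaces all other values by the `R`-th smallest one, has global sensitivity at most `Δ`.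
Here `Shat D` enumerates outcomes sorted by increasing objective value, and `Rk` is the
(0-based) index of the `R`-th best outcome, with `1 < R < |O|`. -/
theorem stmt3 {Z O : Type*} [Fintype O] {n : ℕ}
    (F : O → (Fin n → Z) → ℝ) (Δ : ℝ)
    (hsens : ∀ (o : O) (D D' : Fin n → Z), Neighbor D D' → |F o D - F o D'| ≤ Δ)
    (Shat : (Fin n → Z) → Fin (Fintype.card O) → O)
    (hbij : ∀ D, Function.Bijective (Shat D))
    (hmono : ∀ D, Monotone (fun k => F (Shat D k) D))
    (Rk : Fin (Fintype.card O)) (hRk0 : 0 < (Rk : ℕ)) (hRk1 : (Rk : ℕ) < Fintype.card O - 1)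
    (F' : O → (Fin n → Z) → ℝ)
    (hF' : ∀ (S : O) (D : Fin n → Z),
      F' S D = if ∃ k ≤ Rk, S = Shat D k then F S D else F (Shat D Rk) D) :
    ∀ (S : O) (D D' : Fin n → Z), Neighbor D D' → |F' S D - F' S D'| ≤ Δ := by
  intro S D D' hnb
  rw [Fprime_eq_min F Shat hbij hmono Rk F' hF' S D,
      Fprime_eq_min F Shat hbij hmono Rk F' hF' S D']
  have h1 : F (Shat D Rk) D ≤ F (Shat D' Rk) D' + Δ :=
    orderstat_le F Δ hsens Shat hbij hmono Rk D D' hnb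
  have h2 : F (Shat D' Rk) D' ≤ F (Shat D Rk) D + Δ :=
    orderstat_le F Δ hsens Shat hbij hmono Rk D' D (neighbor_symm hnb)
  have h3 := abs_sub_le_iff.mp (hsens S D D' hnb)
  rw [abs_sub_le_iff]
  constructor
  · rw [sub_le_iff_le_add]
    rcases min_cases (F S D') (F (Shat D' Rk) D') with ⟨he, _⟩ | ⟨he, _⟩ <;> rw [he] <;>
      linarith [min_le_left (F S D) (F (Shat D Rk) D), min_le_right (F S D) (F (Shat D Rk) D), h3.1]
  · rw [sub_le_iff_le_add]
    rcases min_cases (F S D) (F (Shat D Rk) D) with ⟨he, _⟩ | ⟨he, _⟩ <;> rw [he] <;>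
      linarith [min_le_left (F S D') (F (Shat D' Rk) D'), min_le_right (F S D') (F (Shat D' Rk) D'), h3.2]
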